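/- Substitution: the rule (y/x) — from S{X; Γ ⇒ Δ} infer S(y/x){X(y/x); Γ(y/x) ⇒ Δ(y/x)}, where the capture-avoiding substitution of y for the free occurrences of x is applied componentwise to every signature and every formula throughout the nested sequent — is height-preserving admissible in every properly closed nested calculus NQ.L. -/

import Mathlib

set_option maxHeartbeats 1000000

namespace NQML

/-! ## The first-order modal language 𝓛 -/

/-- Formulas of the first-order modal language 𝓛:
`A ::= R i (x₁,…,xₙ) | x = y | ⊥ | A ⊃ A | ∀x A | □A`, variables are natural numbers. -/
inductive Fml : Type
  | rel : ℕ → List ℕ → Fml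
  | eq  : ℕ → ℕ → Fml
  | bot : Fml
  | imp : Fml → Fml → Fml
  | all : ℕ → Fml → Fml
  | box : Fml → Fml
  deriving DecidableEq

namespace Fml

/-- Atomic formulas. -/
def Atomic : Fml → Prop
  | rel _ _ => True
  | eq _ _  => True
  | _       => False

/-- Free variables of a formula. -/
def fv : Fml → Finset ℕ
  | rel _ l => l.toFinset
  | eq a b  => {a, b}
  | bot     => ∅
  | imp A B => fv A ∪ fv B
  | all z A => (fv A).erase z
  | box A   => fv A

/-- Capture-avoiding application of a renaming `σ` to the free variables of a formula;
bound variables are renamed when a capture would occur. -/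
def substF : (ℕ → ℕ) → Fml → Fml
  | σ, rel n l => rel n (l.map σ)
  | σ, eq a b  => eq (σ a) (σ b)
  | _, bot     => bot
  | σ, imp A B => imp (substF σ A) (substF σ B)
  | σ, box A   => box (substF σ A)
  | σ, all z A =>
      let captured := ((fv A).erase z).image σ
      let z' := if z ∈ captured then captured.sup id + 1 else z
      all z' (substF (Function.update σ z z') A)

/-- `A.sub y x` is `A(y/x)`: the capture-avoiding substitution of `y` for the free
occurrences of `x` in `A`. -/
def sub (A : Fml) (y x : ℕ) : Fml := substF (fun v => if v = x then y else v) A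

/-- Defined connectives. -/
def neg (A : Fml) : Fml := imp A bot
def top : Fml := imp bot bot
def conj (A B : Fml) : Fml := neg (imp A (neg B))
def disj (A B : Fml) : Fml := imp (neg A) B
def ex (x : ℕ) (A : Fml) : Fml := neg (all x (neg A))

/-- The existence predicate `𝓔 x := ∃ y (y = x)` (with `y` a variable distinct from `x`). -/
def Epred (x : ℕ) : Fml := ex (x + 1) (eq (x + 1) x)

end Fml

/-! ## Nested sequents -/

mutual
  /-- Nested sequents `S ::= X;Γ⇒Δ | S,[S],…,[S]`: a node carries a signature `X`
  (a multiset of variables), an antecedent `Γ` and a succedent `Δ` (multisets of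
  formulas), and a list of bracketed nested sequents. -/
  inductive NSeq : Type
    | node : Multiset ℕ → Multiset Fml → Multiset Fml → NSeqs → NSeq
  /-- Lists of nested sequents. -/
  inductive NSeqs : Type
    | nil  : NSeqs
    | cons : NSeq → NSeqs → NSeqs
end

namespace NSeqs
def append : NSeqs → NSeqs → NSeqs
  | nil, t => t
  | cons s ss, t => cons s (append ss t)
end NSeqs

instance : Append NSeqs := ⟨NSeqs.append⟩

/-- Merging two nested sequents at the root. -/
def NSeq.merge : NSeq → NSeq → NSeq
  | .node X Γ Δ cs, .node Y Φ Ψ ds => .node (X + Y) (Γ + Φ) (Δ + Ψ) (cs ++ ds)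

/-- Free variables of a multiset of formulas. -/
def msFv (Γ : Multiset Fml) : Finset ℕ := (Γ.map Fml.fv).sup

mutual
  /-- Variables occurring (in the signature or free in a formula) in a nested sequent. -/
  def NSeq.fv : NSeq → Finset ℕ
    | .node X Γ Δ cs => X.toFinset ∪ msFv Γ ∪ msFv Δ ∪ NSeqs.fv cs
  def NSeqs.fv : NSeqs → Finset ℕ
    | .nil => ∅
    | .cons s ss => NSeq.fv s ∪ NSeqs.fv ss
end

mutual
  /-- Componentwise application of a renaming to a nested sequent. -/
  def NSeq.subst : NSeq → (ℕ → ℕ) → NSeq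
    | .node X Γ Δ cs, σ =>
        .node (X.map σ) (Γ.map (Fml.substF σ)) (Δ.map (Fml.substF σ)) (NSeqs.subst cs σ)
  def NSeqs.subst : NSeqs → (ℕ → ℕ) → NSeqs
    | .nil, _ => .nil
    | .cons s ss, σ => .cons (NSeq.subst s σ) (NSeqs.subst ss σ)
end

/-! ## Contexts -/

mutual
  /-- Contexts: nested sequents with holes in consequent position.  A node records
  how many holes occur at that node together with the bracketed sub-contexts. -/
  inductive NCtx : Type
    | node : Multiset ℕ → Multiset Fml → Multiset Fml → ℕ → NCtxs → NCtx
  inductive NCtxs : Type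
    | nil  : NCtxs
    | cons : NCtx → NCtxs → NCtxs
end

namespace NCtxs
def append : NCtxs → NCtxs → NCtxs
  | nil, t => t
  | cons c cs, t => cons c (append cs t)
end NCtxs

instance : Append NCtxs := ⟨NCtxs.append⟩

mutual
  /-- The number of holes of a context. -/
  def NCtx.holes : NCtx → ℕ
    | .node _ _ _ k cs => k + NCtxs.holes cs
  def NCtxs.holes : NCtxs → ℕ
    | .nil => 0
    | .cons c cs => NCtx.holes c + NCtxs.holes cs
end

mutual
  /-- The list of depths of the holes of a context (in the order in which they are filled). -/
  def NCtx.holeDepths : NCtx → List ℕ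
    | .node _ _ _ k cs => List.replicate k 0 ++ (NCtxs.holeDepths cs).map (· + 1)
  def NCtxs.holeDepths : NCtxs → List ℕ
    | .nil => []
    | .cons c cs => NCtx.holeDepths c ++ NCtxs.holeDepths cs
end

mutual
  /-- Filling the holes of a context with a list of nested sequents: each nested sequent
  is merged at the node where the corresponding hole occurs. -/
  def NCtx.fill : NCtx → List NSeq → NSeq
    | .node X Γ Δ k cs, L =>
        (L.take k).foldl NSeq.merge (.node X Γ Δ (NCtxs.fill cs (L.drop k)))
  def NCtxs.fill : NCtxs → List NSeq → NSeqs
    | .nil, _ => .nil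
    | .cons c cs, L =>
        .cons (NCtx.fill c (L.take (NCtx.holes c))) (NCtxs.fill cs (L.drop (NCtx.holes c)))
end

/-- Merging two contexts at the root. -/
def NCtx.mergeC : NCtx → NCtx → NCtx
  | .node X Γ Δ k cs, .node Y Φ Ψ j ds => .node (X + Y) (Γ + Φ) (Δ + Ψ) (k + j) (cs ++ ds)

mutual
  /-- Plugging a context into the first hole of a context. -/
  def NCtx.plug : NCtx → NCtx → NCtx
    | .node X Γ Δ k cs, D =>
        if k = 0 then .node X Γ Δ k (NCtxs.plug cs D)
        else NCtx.mergeC (.node X Γ Δ (k - 1) cs) D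
  def NCtxs.plug : NCtxs → NCtx → NCtxs
    | .nil, _ => .nil
    | .cons c cs, D =>
        if NCtx.holes c = 0 then .cons c (NCtxs.plug cs D) else .cons (NCtx.plug c D) cs
end

/-! ## Frames, axioms and proper closure -/

/-- The axioms D, T, B, 4, 5, CBF, BF, UI. -/
inductive Ax : Type
  | D | T | B | four | five | cbf | bf | ui
  deriving DecidableEq

/-- A frame `⟨W, R, D⟩` with worlds `W`, accessibility `Rel` and domains `Dom` over a
universe `U` of objects; some world has a nonempty domain. -/
structure Frame (W U : Type) : Type where
  Rel : W → W → Prop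
  Dom : W → Set U
  nonempty : Nonempty W
  dom_nonempty : ∃ w, (Dom w).Nonempty

/-- The frame/domain condition corresponding to each axiom. -/
def Frame.sat {W U : Type} (F : Frame W U) : Ax → Prop
  | .D    => ∀ w, ∃ v, F.Rel w v
  | .T    => ∀ w, F.Rel w w
  | .B    => ∀ w v, F.Rel w v → F.Rel v w
  | .four => ∀ w v u, F.Rel w v → F.Rel v u → F.Rel w u
  | .five => ∀ w v u, F.Rel w v → F.Rel w u → F.Rel v u
  | .cbf  => ∀ w v, F.Rel w v → F.Dom w ⊆ F.Dom v
  | .bf   => ∀ w v, F.Rel w v → F.Dom v ⊆ F.Dom w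
  | .ui   => ∀ w v, F.Dom w = F.Dom v

/-- A `Q.L`-frame: a frame satisfying the conditions of all axioms in `L`. -/
def FrameFor {W U : Type} (F : Frame W U) (L : Set Ax) : Prop := ∀ a ∈ L, F.sat a

/-- `L` is properly closed: whenever every `Q.L`-frame satisfies the frame condition of an
axiom among 4, 5, CBF, BF, that axiom belongs to `L`. -/
def ProperlyClosed (L : Set Ax) : Prop :=
  ∀ a ∈ ({Ax.four, Ax.five, Ax.cbf, Ax.bf} : Set Ax),
    (∀ (W U : Type) (F : Frame W U), FrameFor F L → F.sat a) → a ∈ L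

/-! ## Models, satisfaction, validity and the formula interpretation -/

/-- A model: a frame together with a valuation interpreting each `n`-ary relation symbol
at each world by tuples of objects from the union of the domains. -/
structure Model (W U : Type) extends Frame W U where
  Val : W → ℕ → List U → Prop
  val_dom : ∀ w i l, Val w i l → ∀ u ∈ l, ∃ v, u ∈ Dom v

/-- Satisfaction of a formula at a world under an assignment (variables are rigid). -/
def Model.sat {W U : Type} (M : Model W U) : (ℕ → U) → W → Fml → Prop
  | σ, w, .rel i l => M.Val w i (l.map σ)
  | σ, _, .eq a b  => σ a = σ b
  | _, _, .bot     => False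
  | σ, w, .imp A B => M.sat σ w A → M.sat σ w B
  | σ, w, .all x A => ∀ u ∈ M.Dom w, M.sat (Function.update σ x u) w A
  | σ, w, .box A   => ∀ v, M.Rel w v → M.sat σ v A

/-- An assignment maps every variable into the union of the domains. -/
def Assign {W U : Type} (M : Model W U) (σ : ℕ → U) : Prop := ∀ x, ∃ w, σ x ∈ M.Dom w

/-- `Q.L`-validity: truth at every world of every model on a `Q.L`-frame under every
assignment. -/
def Valid (L : Set Ax) (A : Fml) : Prop :=
  ∀ (W U : Type) (M : Model W U), FrameFor M.toFrame L →
    ∀ σ, Assign M σ → ∀ w, M.sat σ w A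

/-- Iterated conjunction and disjunction. -/
def listConj : List Fml → Fml
  | [] => Fml.top
  | A :: l => Fml.conj A (listConj l)

def listDisj : List Fml → Fml
  | [] => Fml.bot
  | A :: l => Fml.disj A (listDisj l)

mutual
  /-- The formula interpretation of a nested sequent:
  `fm(X;Γ⇒Δ,[S₁],…,[Sₙ]) = (⋀_{x∈X} 𝓔x ∧ ⋀Γ ⊃ ⋁Δ) ∨ ⋁ₖ □ fm(Sₖ)`. -/
  noncomputable def NSeq.fm : NSeq → Fml
    | .node X Γ Δ cs =>
        Fml.disj
          (Fml.imp (Fml.conj (listConj (X.toList.map Fml.Epred)) (listConj Γ.toList))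
            (listDisj Δ.toList))
          (NSeqs.fmDisj cs)
  noncomputable def NSeqs.fmDisj : NSeqs → Fml
    | .nil => Fml.bot
    | .cons s ss => Fml.disj (Fml.box (NSeq.fm s)) (NSeqs.fmDisj ss)
end

/-! ## The nested calculus NQ.L -/

/-- A single rule application (instance) of the nested calculus `NQ.L`: `Step L ps S`
says that `S` can be inferred from the list of premisses `ps` by one rule of `NQ.L`. -/
inductive Step (L : Set Ax) : List NSeq → NSeq → Prop
  /-- Initial sequents `S{X; P,Γ ⇒ Δ,P}` with `P` atomic. -/
  | init (C : NCtx) (X : Multiset ℕ) (Γ Δ : Multiset Fml) (P : Fml) :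
      C.holes = 1 → P.Atomic →
      Step L [] (C.fill [.node X (P ::ₘ Γ) (P ::ₘ Δ) .nil])
  /-- `L⊥`. -/
  | botL (C : NCtx) (X : Multiset ℕ) (Γ Δ : Multiset Fml) :
      C.holes = 1 →
      Step L [] (C.fill [.node X (Fml.bot ::ₘ Γ) Δ .nil])
  /-- `L⊃`. -/
  | impL (C : NCtx) (X : Multiset ℕ) (Γ Δ : Multiset Fml) (A B : Fml) :
      C.holes = 1 →
      Step L [C.fill [.node X Γ (A ::ₘ Δ) .nil], C.fill [.node X (B ::ₘ Γ) Δ .nil]]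
        (C.fill [.node X (Fml.imp A B ::ₘ Γ) Δ .nil])
  /-- `R⊃`. -/
  | impR (C : NCtx) (X : Multiset ℕ) (Γ Δ : Multiset Fml) (A B : Fml) :
      C.holes = 1 →
      Step L [C.fill [.node X (A ::ₘ Γ) (B ::ₘ Δ) .nil]]
        (C.fill [.node X Γ (Fml.imp A B ::ₘ Δ) .nil])
  /-- `L∀`. -/
  | allL (C : NCtx) (X : Multiset ℕ) (Γ Δ : Multiset Fml) (x z : ℕ) (A : Fml) :
      C.holes = 1 →
      Step L [C.fill [.node (z ::ₘ X) (A.sub z x ::ₘ Fml.all x A ::ₘ Γ) Δ .nil]]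
        (C.fill [.node (z ::ₘ X) (Fml.all x A ::ₘ Γ) Δ .nil])
  /-- `R∀` with `y` fresh. -/
  | allR (C : NCtx) (X : Multiset ℕ) (Γ Δ : Multiset Fml) (x y : ℕ) (A : Fml) :
      C.holes = 1 → y ∉ NSeq.fv (C.fill [.node X Γ (Fml.all x A ::ₘ Δ) .nil]) →
      Step L [C.fill [.node (y ::ₘ X) Γ (A.sub y x ::ₘ Δ) .nil]]
        (C.fill [.node X Γ (Fml.all x A ::ₘ Δ) .nil])
  /-- `L□`. -/
  | boxL (C : NCtx) (X Y : Multiset ℕ) (Γ Δ Φ Ψ : Multiset Fml) (ts : NSeqs) (A : Fml) :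
      C.holes = 1 →
      Step L [C.fill [.node X (Fml.box A ::ₘ Γ) Δ (.cons (.node Y (A ::ₘ Φ) Ψ ts) .nil)]]
        (C.fill [.node X (Fml.box A ::ₘ Γ) Δ (.cons (.node Y Φ Ψ ts) .nil)])
  /-- `R□`. -/
  | boxR (C : NCtx) (X : Multiset ℕ) (Γ Δ : Multiset Fml) (A : Fml) :
      C.holes = 1 →
      Step L [C.fill [.node X Γ Δ (.cons (.node 0 0 {A} .nil) .nil)]]
        (C.fill [.node X Γ (Fml.box A ::ₘ Δ) .nil])
  /-- `Ref`. -/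
  | ref (C : NCtx) (X : Multiset ℕ) (Γ Δ : Multiset Fml) (x : ℕ) :
      C.holes = 1 →
      Step L [C.fill [.node X (Fml.eq x x ::ₘ Γ) Δ .nil]] (C.fill [.node X Γ Δ .nil])
  /-- `Repl` (with `P` atomic). -/
  | repl (C : NCtx) (X : Multiset ℕ) (Γ Δ : Multiset Fml) (x y z : ℕ) (P : Fml) :
      C.holes = 1 → P.Atomic →
      Step L [C.fill [.node X (P.sub y z ::ₘ Fml.eq x y ::ₘ P.sub x z ::ₘ Γ) Δ .nil]]
        (C.fill [.node X (Fml.eq x y ::ₘ P.sub x z ::ₘ Γ) Δ .nil])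
  /-- `Repl_X`. -/
  | replX (C : NCtx) (X : Multiset ℕ) (Γ Δ : Multiset Fml) (x y : ℕ) :
      C.holes = 1 →
      Step L [C.fill [.node (x ::ₘ y ::ₘ X) (Fml.eq x y ::ₘ Γ) Δ .nil]]
        (C.fill [.node (x ::ₘ X) (Fml.eq x y ::ₘ Γ) Δ .nil])
  /-- `Rig`. -/
  | rig (C : NCtx) (X Y : Multiset ℕ) (Γ Δ Φ Ψ : Multiset Fml) (x y : ℕ) :
      C.holes = 2 →
      Step L [C.fill [.node X (Fml.eq x y ::ₘ Γ) Δ .nil, .node Y (Fml.eq x y ::ₘ Φ) Ψ .nil]]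
        (C.fill [.node X (Fml.eq x y ::ₘ Γ) Δ .nil, .node Y Φ Ψ .nil])
  /-- `R_D`. -/
  | rD (C : NCtx) (X : Multiset ℕ) (Γ Δ : Multiset Fml) :
      Ax.D ∈ L → C.holes = 1 →
      Step L [C.fill [.node X Γ Δ (.cons (.node 0 0 0 .nil) .nil)]]
        (C.fill [.node X Γ Δ .nil])
  /-- `R_T`. -/
  | rT (C : NCtx) (X : Multiset ℕ) (Γ Δ : Multiset Fml) (A : Fml) :
      Ax.T ∈ L → C.holes = 1 →
      Step L [C.fill [.node X (A ::ₘ Fml.box A ::ₘ Γ) Δ .nil]]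
        (C.fill [.node X (Fml.box A ::ₘ Γ) Δ .nil])
  /-- `R_B`. -/
  | rB (C : NCtx) (X Y : Multiset ℕ) (Γ Δ Φ Ψ : Multiset Fml) (ts : NSeqs) (A : Fml) :
      Ax.B ∈ L → C.holes = 1 →
      Step L [C.fill [.node X (A ::ₘ Γ) Δ (.cons (.node Y (Fml.box A ::ₘ Φ) Ψ ts) .nil)]]
        (C.fill [.node X Γ Δ (.cons (.node Y (Fml.box A ::ₘ Φ) Ψ ts) .nil)])
  /-- `R_4`. -/
  | r4 (C : NCtx) (X Y : Multiset ℕ) (Γ Δ Φ Ψ : Multiset Fml) (ts : NSeqs) (A : Fml) :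
      Ax.four ∈ L → C.holes = 1 →
      Step L [C.fill [.node X (Fml.box A ::ₘ Γ) Δ (.cons (.node Y (Fml.box A ::ₘ Φ) Ψ ts) .nil)]]
        (C.fill [.node X (Fml.box A ::ₘ Γ) Δ (.cons (.node Y Φ Ψ ts) .nil)])
  /-- `R_5`, with the side condition that the second hole has depth ≥ 1. -/
  | r5 (C : NCtx) (X Y : Multiset ℕ) (Γ Δ Φ Ψ : Multiset Fml) (A : Fml) :
      Ax.five ∈ L → (∃ d₁ d₂, C.holeDepths = [d₁, d₂] ∧ 1 ≤ d₂) →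
      Step L [C.fill [.node X (Fml.box A ::ₘ Γ) Δ .nil, .node Y (Fml.box A ::ₘ Φ) Ψ .nil]]
        (C.fill [.node X (Fml.box A ::ₘ Γ) Δ .nil, .node Y Φ Ψ .nil])
  /-- `R_cbf`. -/
  | rcbf (C : NCtx) (X Y : Multiset ℕ) (Γ Δ Φ Ψ : Multiset Fml) (ts : NSeqs) (x : ℕ) :
      Ax.cbf ∈ L → C.holes = 1 →
      Step L [C.fill [.node (x ::ₘ X) Γ Δ (.cons (.node (x ::ₘ Y) Φ Ψ ts) .nil)]]
        (C.fill [.node (x ::ₘ X) Γ Δ (.cons (.node Y Φ Ψ ts) .nil)])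
  /-- `R_bf`. -/
  | rbf (C : NCtx) (X Y : Multiset ℕ) (Γ Δ Φ Ψ : Multiset Fml) (ts : NSeqs) (x : ℕ) :
      Ax.bf ∈ L → C.holes = 1 →
      Step L [C.fill [.node (x ::ₘ X) Γ Δ (.cons (.node (x ::ₘ Y) Φ Ψ ts) .nil)]]
        (C.fill [.node X Γ Δ (.cons (.node (x ::ₘ Y) Φ Ψ ts) .nil)])
  /-- `R_ui`. -/
  | rui (C : NCtx) (X : Multiset ℕ) (Γ Δ : Multiset Fml) (x : ℕ) :
      Ax.ui ∈ L → C.holes = 1 →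
      Step L [C.fill [.node (x ::ₘ X) Γ Δ .nil]] (C.fill [.node X Γ Δ .nil])
  /-- `R_5dom`, present iff `5 ∈ L` and `{CBF, BF} ∩ L ≠ ∅`; both holes have depth ≥ 1. -/
  | r5dom (C : NCtx) (X Y : Multiset ℕ) (Γ Δ Φ Ψ : Multiset Fml) (x : ℕ) :
      Ax.five ∈ L → (Ax.cbf ∈ L ∨ Ax.bf ∈ L) →
      (∃ d₁ d₂, C.holeDepths = [d₁, d₂] ∧ 1 ≤ d₁ ∧ 1 ≤ d₂) →
      Step L [C.fill [.node (x ::ₘ X) Γ Δ .nil, .node (x ::ₘ Y) Φ Ψ .nil]]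
        (C.fill [.node (x ::ₘ X) Γ Δ .nil, .node Y Φ Ψ .nil])

/-- `Deriv L n S`: the nested sequent `S` is derivable in `NQ.L` with a derivation of
height at most `n`. -/
inductive Deriv (L : Set Ax) : ℕ → NSeq → Prop
  | step {n : ℕ} {ps : List NSeq} {S : NSeq} :
      Step L ps S → (∀ p ∈ ps, Deriv L n p) → Deriv L (n + 1) S

/-- `S` is `NQ.L`-derivable. -/
def Derivable (L : Set Ax) (S : NSeq) : Prop := ∃ n, Deriv L n S

end NQML

namespace NQML


lemma upd_app (f : ℕ → ℕ) (a b v : ℕ) :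
    Function.update f a b v = if v = a then b else f v := by
  rcases Classical.em (v = a) with rfl | h
  · rw [Function.update_self, if_pos rfl]
  · rw [Function.update_of_ne h, if_neg h]

lemma mem_fv_all {v z : ℕ} {A : Fml} : v ∈ (Fml.all z A).fv ↔ v ≠ z ∧ v ∈ A.fv := by
  simp [Fml.fv, Finset.mem_erase]

lemma toFinset_map (σ : ℕ → ℕ) (l : List ℕ) : (l.map σ).toFinset = l.toFinset.image σ := by
  induction l with
  | nil => simp
  | cons a l ih => simp [ih]

/-- `FSub σ A B`: `B` is a capture-avoiding application of `σ` to `A`, up to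
the choice of fresh bound variables. -/
inductive FSub : (ℕ → ℕ) → Fml → Fml → Prop
  | rel (σ n l) : FSub σ (.rel n l) (.rel n (l.map σ))
  | eq (σ a b) : FSub σ (.eq a b) (.eq (σ a) (σ b))
  | bot (σ) : FSub σ .bot .bot
  | imp {σ A A' B B'} : FSub σ A A' → FSub σ B B' → FSub σ (.imp A B) (.imp A' B')
  | box {σ A A'} : FSub σ A A' → FSub σ (.box A) (.box A')
  | all {σ A A'} (z w : ℕ) : w ∉ ((Fml.fv A).erase z).image σ →
      FSub (Function.update σ z w) A A' → FSub σ (.all z A) (.all w A')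

lemma image_update_erase {s : Finset ℕ} {σ : ℕ → ℕ} {z w : ℕ}
    (hw : w ∉ (s.erase z).image σ) :
    (s.image (Function.update σ z w)).erase w = (s.erase z).image σ := by
  ext v
  simp only [Finset.mem_erase, Finset.mem_image] at *
  constructor
  · rintro ⟨hv, a, ha, rfl⟩
    rcases Classical.em (a = z) with rfl | hne
    · simp [Function.update_self] at hv
    · exact ⟨a, ⟨hne, ha⟩, by simp [Function.update_of_ne hne]⟩
  · rintro ⟨a, ⟨hne, ha⟩, rfl⟩
    refine ⟨fun h => hw ⟨a, ⟨hne, ha⟩, h⟩, a, ha, Function.update_of_ne hne _ _⟩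

lemma FSub.fv_eq {σ : ℕ → ℕ} {A B : Fml} (h : FSub σ A B) :
    B.fv = A.fv.image σ := by
  induction h with
  | rel σ n l => simp [Fml.fv, toFinset_map]
  | eq σ a b => simp [Fml.fv, Finset.image_insert]
  | bot => simp [Fml.fv]
  | imp h1 h2 ih1 ih2 => simp [Fml.fv, ih1, ih2, Finset.image_union]
  | box h ih => simpa [Fml.fv] using ih
  | all z w hw h ih =>
    show (Fml.fv _).erase w = _
    rw [ih, image_update_erase hw]; rfl

lemma FSub.congr {σ σ' : ℕ → ℕ} {A B : Fml} (h : FSub σ A B)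
    (hag : ∀ v ∈ A.fv, σ v = σ' v) : FSub σ' A B := by
  induction h generalizing σ' with
  | rel σ n l =>
    have he : l.map σ = l.map σ' := List.map_congr_left fun a ha => hag a (by simp [Fml.fv, ha])
    rw [he]; constructor
  | eq σ a b =>
    rw [hag a (by simp [Fml.fv]), hag b (by simp [Fml.fv])]; constructor
  | bot => constructor
  | imp h1 h2 ih1 ih2 =>
    exact .imp (ih1 fun v hv => hag v (by simp [Fml.fv, hv]))
      (ih2 fun v hv => hag v (by simp [Fml.fv, hv]))
  | box h ih => exact .box (ih fun v hv => hag v (by simpa [Fml.fv] using hv))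
  | all z w hw h ih =>
    refine .all z w ?_ (ih fun v hv => ?_)
    · intro hmem
      rcases Finset.mem_image.1 hmem with ⟨a, ha, haeq⟩
      exact hw (Finset.mem_image.2 ⟨a, ha, by
        rw [hag a (mem_fv_all.2 ⟨(Finset.mem_erase.1 ha).1, (Finset.mem_erase.1 ha).2⟩)]
        exact haeq⟩)
    · rcases Classical.em (v = z) with rfl | hne
      · simp [upd_app]
      · simpa [upd_app, hne] using hag v (mem_fv_all.2 ⟨hne, hv⟩)

lemma FSub.substF (σ : ℕ → ℕ) (A : Fml) : FSub σ A (Fml.substF σ A) := by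
  induction A generalizing σ with
  | rel n l => exact .rel σ n l
  | eq a b => exact .eq σ a b
  | bot => exact .bot σ
  | imp A B ihA ihB => exact .imp (ihA σ) (ihB σ)
  | box A ih => exact .box (ih σ)
  | all z A ih =>
    show FSub σ (.all z A) (.all _ _)
    refine .all z _ ?_ (ih _)
    set capt := ((Fml.fv A).erase z).image σ with hc
    by_cases hz : z ∈ capt
    · simp only [hz, if_true]
      intro hmem
      have h2 : capt.sup id + 1 ≤ capt.sup id := Finset.le_sup (f := id) hmem
      omega
    · simpa [hz] using hz

lemma FSub.sub (A : Fml) (y x : ℕ) :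
    FSub (fun v => if v = x then y else v) A (A.sub y x) := FSub.substF _ A

/-- Composition. -/
lemma FSub.comp {A : Fml} : ∀ {τ σ μ : ℕ → ℕ} {B C : Fml},
    FSub τ A B → FSub σ B C → (∀ v ∈ A.fv, μ v = σ (τ v)) → FSub μ A C := by
  induction A with
  | rel n l =>
    intro τ σ μ B C h1 h2 hag
    cases h1; cases h2
    have he : (l.map τ).map σ = l.map μ := by
      rw [List.map_map]
      exact List.map_congr_left fun a ha => (hag a (by simp [Fml.fv, ha])).symm
    rw [he]; constructor
  | eq a b =>
    intro τ σ μ B C h1 h2 hag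
    cases h1; cases h2
    rw [← hag a (by simp [Fml.fv]), ← hag b (by simp [Fml.fv])]; constructor
  | bot => intro τ σ μ B C h1 h2 hag; cases h1; cases h2; constructor
  | imp A B ihA ihB =>
    intro τ σ μ B' C h1 h2 hag
    cases h1 with
    | imp h1A h1B =>
      cases h2 with
      | imp h2A h2B =>
        exact .imp (ihA h1A h2A fun v hv => hag v (by simp [Fml.fv, hv]))
          (ihB h1B h2B fun v hv => hag v (by simp [Fml.fv, hv]))
  | box A ih =>
    intro τ σ μ B C h1 h2 hag
    cases h1 with
    | box h1A =>
      cases h2 with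
      | box h2A => exact .box (ih h1A h2A fun v hv => hag v (by simpa [Fml.fv] using hv))
  | all z A ih =>
    intro τ σ μ B C h1 h2 hag
    cases h1 with
    | all _ w hw h1' =>
      cases h2 with
      | all _ u hu h2' =>
        refine .all z u ?_ (ih h1' h2' fun v hv => ?_)
        · intro hmem
          rcases Finset.mem_image.1 hmem with ⟨v, hv, hveq⟩
          have hvz : v ≠ z := (Finset.mem_erase.1 hv).1
          have hvA : v ∈ A.fv := (Finset.mem_erase.1 hv).2
          apply hu
          refine Finset.mem_image.2 ⟨τ v, ?_, ?_⟩
          · rw [h1'.fv_eq, image_update_erase hw]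
            exact Finset.mem_image_of_mem _ hv
          · rw [← hveq]; exact (hag v (mem_fv_all.2 ⟨hvz, hvA⟩)).symm
        · rcases Classical.em (v = z) with rfl | hne
          · simp [upd_app]
          · have hτ : τ v ≠ w := fun hc => hw (Finset.mem_image.2
              ⟨v, Finset.mem_erase.2 ⟨hne, hv⟩, hc⟩)
            simpa [upd_app, hne, hτ] using hag v (mem_fv_all.2 ⟨hne, hv⟩)

/-- Division. -/
lemma FSub.div {A : Fml} : ∀ {τ μ σ : ℕ → ℕ} {B C : Fml},
    FSub τ A B → FSub μ A C → (∀ v ∈ A.fv, μ v = σ (τ v)) → FSub σ B C := by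
  induction A with
  | rel n l =>
    intro τ μ σ B C h1 h2 hag
    cases h1; cases h2
    have he : l.map μ = (l.map τ).map σ := by
      rw [List.map_map]
      exact List.map_congr_left fun a ha => hag a (by simp [Fml.fv, ha])
    rw [he]; constructor
  | eq a b =>
    intro τ μ σ B C h1 h2 hag
    cases h1; cases h2
    rw [hag a (by simp [Fml.fv]), hag b (by simp [Fml.fv])]; constructor
  | bot => intro τ μ σ B C h1 h2 hag; cases h1; cases h2; constructor
  | imp A B ihA ihB =>
    intro τ μ σ B' C h1 h2 hag
    cases h1 with
    | imp h1A h1B =>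
      cases h2 with
      | imp h2A h2B =>
        exact .imp (ihA h1A h2A fun v hv => hag v (by simp [Fml.fv, hv]))
          (ihB h1B h2B fun v hv => hag v (by simp [Fml.fv, hv]))
  | box A ih =>
    intro τ μ σ B C h1 h2 hag
    cases h1 with
    | box h1A =>
      cases h2 with
      | box h2A => exact .box (ih h1A h2A fun v hv => hag v (by simpa [Fml.fv] using hv))
  | all z A ih =>
    intro τ μ σ B C h1 h2 hag
    cases h1 with
    | all _ w hw h1' =>
      cases h2 with
      | all _ u hu h2' =>
        refine .all w u ?_ (ih h1' h2' fun v hv => ?_)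
        · rw [h1'.fv_eq, image_update_erase hw, Finset.image_image]
          intro hmem
          rcases Finset.mem_image.1 hmem with ⟨v, hv, hveq⟩
          have hvz : v ≠ z := (Finset.mem_erase.1 hv).1
          have hvA : v ∈ A.fv := (Finset.mem_erase.1 hv).2
          apply hu
          refine Finset.mem_image.2 ⟨v, hv, ?_⟩
          rw [← hveq]
          exact hag v (mem_fv_all.2 ⟨hvz, hvA⟩)
        · rcases Classical.em (v = z) with rfl | hne
          · simp [upd_app]
          · have hτ : τ v ≠ w := fun hc => hw (Finset.mem_image.2
              ⟨v, Finset.mem_erase.2 ⟨hne, hv⟩, hc⟩)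
            simpa [upd_app, hne, hτ] using hag v (mem_fv_all.2 ⟨hne, hv⟩)

lemma FSub.atomic_eq {σ : ℕ → ℕ} {P Q : Fml} (h : FSub σ P Q) (hP : P.Atomic) :
    Q = Fml.substF σ P := by
  cases h <;> first
    | rfl
    | exact absurd hP (by simp [Fml.Atomic])

lemma Atomic.fsub {σ : ℕ → ℕ} {P Q : Fml} (h : FSub σ P Q) (hP : P.Atomic) :
    Q.Atomic := by cases h <;> simp_all [Fml.Atomic]


/-! ### Multiset-level relation -/

def MRel (σ : ℕ → ℕ) : Multiset Fml → Multiset Fml → Prop := Multiset.Rel (FSub σ)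

lemma MRel.zero (σ : ℕ → ℕ) : MRel σ 0 0 := Multiset.Rel.zero

lemma MRel.cons {σ : ℕ → ℕ} {A B : Fml} {Γ Γ' : Multiset Fml} (h : FSub σ A B)
    (hΓ : MRel σ Γ Γ') : MRel σ (A ::ₘ Γ) (B ::ₘ Γ') := Multiset.Rel.cons h hΓ

lemma MRel.self (σ : ℕ → ℕ) (Γ : Multiset Fml) : MRel σ Γ (Γ.map (Fml.substF σ)) := by
  induction Γ using Multiset.induction_on with
  | empty => exact Multiset.Rel.zero
  | cons A Γ ih =>
    rw [Multiset.map_cons]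
    exact Multiset.Rel.cons (FSub.substF σ A) ih

lemma mem_msFv {A : Fml} {Γ : Multiset Fml} {v : ℕ} (hA : A ∈ Γ) (hv : v ∈ A.fv) :
    v ∈ msFv Γ :=
  (Finset.le_iff_subset.mp (Multiset.le_sup (Multiset.mem_map_of_mem Fml.fv hA))) hv

lemma msFv_cons (A : Fml) (Γ : Multiset Fml) : msFv (A ::ₘ Γ) = A.fv ∪ msFv Γ := by
  simp [msFv, Multiset.sup_cons]

lemma msFv_add (Γ Δ : Multiset Fml) : msFv (Γ + Δ) = msFv Γ ∪ msFv Δ := by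
  simp [msFv, Multiset.sup_add]

lemma MRel.congr {σ ρ : ℕ → ℕ} {Γ Γ' : Multiset Fml} (h : MRel σ Γ Γ')
    (hag : ∀ v ∈ msFv Γ, σ v = ρ v) : MRel ρ Γ Γ' := by
  induction h with
  | zero => exact Multiset.Rel.zero
  | @cons a b as bs hab _ ih =>
    exact Multiset.Rel.cons
      (hab.congr fun v hv => hag v (mem_msFv (Multiset.mem_cons_self a as) hv))
      (ih fun v hv => hag v (by rw [msFv_cons]; exact Finset.mem_union_right _ hv))

/-! ### Sequent-level relation -/

mutual
  inductive SRel : (ℕ → ℕ) → NSeq → NSeq → Prop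
    | node {σ : ℕ → ℕ} {X : Multiset ℕ} {Γ Δ Γ' Δ' : Multiset Fml} {cs cs' : NSeqs} :
        MRel σ Γ Γ' → MRel σ Δ Δ' → SsRel σ cs cs' →
        SRel σ (.node X Γ Δ cs) (.node (X.map σ) Γ' Δ' cs')
  inductive SsRel : (ℕ → ℕ) → NSeqs → NSeqs → Prop
    | nil (σ : ℕ → ℕ) : SsRel σ .nil .nil
    | cons {σ : ℕ → ℕ} {s t : NSeq} {ss ts : NSeqs} :
        SRel σ s t → SsRel σ ss ts → SsRel σ (.cons s ss) (.cons t ts)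
end

mutual
  theorem SRel.self (σ : ℕ → ℕ) : ∀ s : NSeq, SRel σ s (s.subst σ)
    | .node X Γ Δ cs => by
      rw [NSeq.subst]
      exact SRel.node (MRel.self σ Γ) (MRel.self σ Δ) (SsRel.self σ cs)
  theorem SsRel.self (σ : ℕ → ℕ) : ∀ ss : NSeqs, SsRel σ ss (ss.subst σ)
    | .nil => by rw [NSeqs.subst]; exact .nil σ
    | .cons s ss => by
      rw [NSeqs.subst]
      exact .cons (SRel.self σ s) (SsRel.self σ ss)
end

lemma SsRel.append {σ : ℕ → ℕ} :
    ∀ {as : NSeqs} {as' : NSeqs} {bs bs' : NSeqs},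
      SsRel σ as as' → SsRel σ bs bs' → SsRel σ (as ++ bs) (as' ++ bs')
  | .nil, _, bs, bs', h1, h2 => by cases h1; exact h2
  | .cons s ss, _, bs, bs', h1, h2 => by
    cases h1 with
    | cons hs hss =>
      show SsRel σ (NSeqs.append _ _) (NSeqs.append _ _)
      rw [NSeqs.append, NSeqs.append]
      exact .cons hs (SsRel.append hss h2)

lemma SsRel.append_inv {σ : ℕ → ℕ} :
    ∀ (as : NSeqs) {bs ct : NSeqs}, SsRel σ (as ++ bs) ct →
      ∃ ct₁ ct₂, SsRel σ as ct₁ ∧ SsRel σ bs ct₂ ∧ ct = ct₁ ++ ct₂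
  | .nil, bs, ct, h => ⟨.nil, ct, .nil σ, h, rfl⟩
  | .cons s ss, bs, ct, h => by
    have h' : SsRel σ (.cons s (ss ++ bs)) ct := h
    cases h' with
    | cons hs hss =>
      rcases SsRel.append_inv ss hss with ⟨ct₁, ct₂, h1, h2, rfl⟩
      exact ⟨.cons _ ct₁, ct₂, .cons hs h1, h2, rfl⟩

lemma SRel.merge {σ : ℕ → ℕ} {s₁ s₂ t₁ t₂ : NSeq} (h₁ : SRel σ s₁ t₁)
    (h₂ : SRel σ s₂ t₂) : SRel σ (s₁.merge s₂) (t₁.merge t₂) := by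
  cases h₁ with
  | @node X₁ Γ₁ Δ₁ Γ₁' Δ₁' cs₁ cs₁' hΓ₁ hΔ₁ hc₁ =>
    cases h₂ with
    | @node X₂ Γ₂ Δ₂ Γ₂' Δ₂' cs₂ cs₂' hΓ₂ hΔ₂ hc₂ =>
      rw [NSeq.merge, NSeq.merge, ← Multiset.map_add]
      exact SRel.node (hΓ₁.add hΓ₂) (hΔ₁.add hΔ₂) (hc₁.append hc₂)

lemma SRel.merge_inv {σ : ℕ → ℕ} {s₁ s₂ T : NSeq} (h : SRel σ (s₁.merge s₂) T) :
    ∃ t₁ t₂, SRel σ s₁ t₁ ∧ SRel σ s₂ t₂ ∧ T = t₁.merge t₂ := by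
  obtain ⟨X₁, Γ₁, Δ₁, c₁⟩ := s₁
  obtain ⟨X₂, Γ₂, Δ₂, c₂⟩ := s₂
  rw [NSeq.merge] at h
  cases h with
  | node hΓ hΔ hc =>
    rcases Multiset.rel_add_left.1 hΓ with ⟨Γ₁', Γ₂', hG1, hG2, rfl⟩
    rcases Multiset.rel_add_left.1 hΔ with ⟨Δ₁', Δ₂', hD1, hD2, rfl⟩
    rcases SsRel.append_inv c₁ hc with ⟨c₁', c₂', hc1, hc2, rfl⟩
    exact ⟨.node (X₁.map σ) Γ₁' Δ₁' c₁', .node (X₂.map σ) Γ₂' Δ₂' c₂',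
      .node hG1 hD1 hc1, .node hG2 hD2 hc2, by rw [NSeq.merge, Multiset.map_add]⟩

lemma foldl_merge_rel {σ : ℕ → ℕ} {l l' : List NSeq} (h : List.Forall₂ (SRel σ) l l') :
    ∀ {a a' : NSeq}, SRel σ a a' →
      SRel σ (l.foldl NSeq.merge a) (l'.foldl NSeq.merge a') := by
  induction h with
  | nil => intro a a' ha; exact ha
  | cons h₁ h₂ ih => intro a a' ha; exact ih (ha.merge h₁)

lemma foldl_merge_inv {σ : ℕ → ℕ} :
    ∀ (l : List NSeq) {a T : NSeq}, SRel σ (l.foldl NSeq.merge a) T →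
      ∃ a' l', SRel σ a a' ∧ List.Forall₂ (SRel σ) l l' ∧ T = l'.foldl NSeq.merge a' := by
  intro l
  induction l with
  | nil => intro a T h; exact ⟨T, [], h, .nil, rfl⟩
  | cons x xs ih =>
    intro a T h
    rcases ih (a := a.merge x) h with ⟨a'', l', ha'', hl', rfl⟩
    rcases SRel.merge_inv ha'' with ⟨a', x', ha, hx, rfl⟩
    exact ⟨a', x' :: l', ha, .cons hx hl', rfl⟩

/-! ### Context-level relation -/

mutual
  inductive CRel : (ℕ → ℕ) → NCtx → NCtx → Prop
    | node {σ : ℕ → ℕ} {X : Multiset ℕ} {Γ Δ Γ' Δ' : Multiset Fml} {k : ℕ}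
        {cs cs' : NCtxs} :
        MRel σ Γ Γ' → MRel σ Δ Δ' → CsRel σ cs cs' →
        CRel σ (.node X Γ Δ k cs) (.node (X.map σ) Γ' Δ' k cs')
  inductive CsRel : (ℕ → ℕ) → NCtxs → NCtxs → Prop
    | nil (σ : ℕ → ℕ) : CsRel σ .nil .nil
    | cons {σ : ℕ → ℕ} {c c' : NCtx} {cs cs' : NCtxs} :
        CRel σ c c' → CsRel σ cs cs' → CsRel σ (.cons c cs) (.cons c' cs')
end

mutual
  theorem CRel.holes_eq {σ : ℕ → ℕ} : ∀ {C C' : NCtx}, CRel σ C C' → C'.holes = C.holes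
    | .node X Γ Δ k cs, _, h => by
      cases h with
      | node _ _ hcs => rw [NCtx.holes, NCtx.holes, CsRel.holes_eq hcs]
  theorem CsRel.holes_eq {σ : ℕ → ℕ} :
      ∀ {cs cs' : NCtxs}, CsRel σ cs cs' → cs'.holes = cs.holes
    | .nil, _, h => by cases h; rfl
    | .cons c cs, _, h => by
      cases h with
      | cons hc hcs =>
        rw [NCtxs.holes, NCtxs.holes, CRel.holes_eq hc, CsRel.holes_eq hcs]
end

mutual
  theorem CRel.holeDepths_eq {σ : ℕ → ℕ} :
      ∀ {C C' : NCtx}, CRel σ C C' → C'.holeDepths = C.holeDepths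
    | .node X Γ Δ k cs, _, h => by
      cases h with
      | node _ _ hcs =>
        rw [NCtx.holeDepths, NCtx.holeDepths, CsRel.holeDepths_eq hcs]
  theorem CsRel.holeDepths_eq {σ : ℕ → ℕ} :
      ∀ {cs cs' : NCtxs}, CsRel σ cs cs' → cs'.holeDepths = cs.holeDepths
    | .nil, _, h => by cases h; rfl
    | .cons c cs, _, h => by
      cases h with
      | cons hc hcs =>
        rw [NCtxs.holeDepths, NCtxs.holeDepths, CRel.holeDepths_eq hc,
          CsRel.holeDepths_eq hcs]
end

mutual
  theorem CRel.fill_rel {σ : ℕ → ℕ} :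
      ∀ {C C' : NCtx}, CRel σ C C' → ∀ {L L' : List NSeq},
        List.Forall₂ (SRel σ) L L' → SRel σ (C.fill L) (C'.fill L')
    | .node X Γ Δ k cs, _, h, L, L', hL => by
      cases h with
      | node hΓ hΔ hcs =>
        rw [NCtx.fill, NCtx.fill]
        exact foldl_merge_rel (List.forall₂_take k hL)
          (SRel.node hΓ hΔ (CsRel.fill_rel hcs (List.forall₂_drop k hL)))
  theorem CsRel.fill_rel {σ : ℕ → ℕ} :
      ∀ {cs cs' : NCtxs}, CsRel σ cs cs' → ∀ {L L' : List NSeq},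
        List.Forall₂ (SRel σ) L L' → SsRel σ (cs.fill L) (cs'.fill L')
    | .nil, _, h, L, L', hL => by cases h; rw [NCtxs.fill, NCtxs.fill]; exact .nil σ
    | .cons c cs, _, h, L, L', hL => by
      cases h with
      | cons hc hcs =>
        rw [NCtxs.fill, NCtxs.fill, CRel.holes_eq hc]
        exact .cons (CRel.fill_rel hc (List.forall₂_take _ hL))
          (CsRel.fill_rel hcs (List.forall₂_drop _ hL))
end

lemma take_drop_append {α : Type} {k : ℕ} {l' M' : List α}
    (h : l'.length = k ∨ (M' = [] ∧ l'.length ≤ k)) :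
    (l' ++ M').take k = l' ∧ (l' ++ M').drop k = M' := by
  rcases h with rfl | ⟨rfl, hle⟩
  · exact ⟨List.take_left, List.drop_left⟩
  · rw [List.append_nil]
    exact ⟨List.take_of_length_le hle, List.drop_eq_nil_of_le hle⟩

lemma length_cases {k m : ℕ} {L l' M' : List NSeq}
    (h1 : l'.length = (L.take k).length) (h2 : M'.length = ((L.drop k).take m).length) :
    l'.length = k ∨ (M' = [] ∧ l'.length ≤ k) := by
  rw [List.length_take] at h1
  rw [List.length_take, List.length_drop] at h2
  rcases le_or_gt k L.length with hk | hk
  · left; omega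
  · right
    refine ⟨List.length_eq_zero_iff.mp (by omega), by omega⟩

mutual
  theorem NCtx.fill_inv {σ : ℕ → ℕ} :
      ∀ (C : NCtx) {L : List NSeq} {T : NSeq}, SRel σ (C.fill L) T →
        ∃ C' L', CRel σ C C' ∧ List.Forall₂ (SRel σ) (L.take C.holes) L' ∧
          T = C'.fill L'
    | .node X Γ Δ k cs, L, T, h => by
      rw [NCtx.fill] at h
      rcases foldl_merge_inv _ h with ⟨a', l', ha, hl, rfl⟩
      cases ha with
      | @node _ _ _ Γ' Δ' _ cs'' hΓ hΔ hcs =>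
        rcases NCtxs.fill_inv cs hcs with ⟨cs', M', hcs', hM, rfl⟩
        have hlen := length_cases (List.Forall₂.length_eq hl).symm
          (List.Forall₂.length_eq hM).symm
        rcases take_drop_append (M' := M') hlen with ⟨htake, hdrop⟩
        refine ⟨.node (X.map σ) Γ' Δ' k cs', l' ++ M', .node hΓ hΔ hcs', ?_, ?_⟩
        · rw [NCtx.holes, List.take_add]
          exact List.rel_append hl hM
        · rw [NCtx.fill, htake, hdrop]
  theorem NCtxs.fill_inv {σ : ℕ → ℕ} :
      ∀ (cs : NCtxs) {M : List NSeq} {T : NSeqs}, SsRel σ (cs.fill M) T →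
        ∃ cs' M', CsRel σ cs cs' ∧ List.Forall₂ (SRel σ) (M.take cs.holes) M' ∧
          T = cs'.fill M'
    | .nil, M, T, h => by
      rw [NCtxs.fill] at h
      cases h
      exact ⟨.nil, [], .nil σ, by rw [NCtxs.holes]; simp, by rw [NCtxs.fill]⟩
    | .cons c cs, M, T, h => by
      rw [NCtxs.fill] at h
      cases h with
      | cons hs hss =>
        rcases NCtx.fill_inv c hs with ⟨c', L', hc', hL, rfl⟩
        rcases NCtxs.fill_inv cs hss with ⟨cs', M'', hcs', hM, rfl⟩
        rw [List.take_take, min_self] at hL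
        have hlen := length_cases (List.Forall₂.length_eq hL).symm
          (List.Forall₂.length_eq hM).symm
        rcases take_drop_append (M' := M'') hlen with ⟨htake, hdrop⟩
        refine ⟨.cons c' cs', L' ++ M'', .cons hc' hcs', ?_, ?_⟩
        · rw [NCtxs.holes, List.take_add]
          exact List.rel_append hL hM
        · rw [NCtxs.fill, CRel.holes_eq hc', htake, hdrop]
end

/-! ### Free variables of contexts and congruence -/

mutual
  def NCtx.fvC : NCtx → Finset ℕ
    | .node X Γ Δ _ cs => X.toFinset ∪ msFv Γ ∪ msFv Δ ∪ NCtxs.fvCs cs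
  def NCtxs.fvCs : NCtxs → Finset ℕ
    | .nil => ∅
    | .cons c cs => c.fvC ∪ NCtxs.fvCs cs
end

def listFv (l : List NSeq) : Finset ℕ := l.foldr (fun s acc => s.fv ∪ acc) ∅

lemma listFv_append (a b : List NSeq) : listFv (a ++ b) = listFv a ∪ listFv b := by
  induction a with
  | nil => simp [listFv]
  | cons s ss ih =>
    show s.fv ∪ listFv (ss ++ b) = (s.fv ∪ listFv ss) ∪ listFv b
    rw [ih, Finset.union_assoc]

lemma NSeqs.fv_append : ∀ (a b : NSeqs), (a ++ b).fv = a.fv ∪ b.fv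
  | .nil, b => by
    show (NSeqs.append .nil b).fv = NSeqs.fv .nil ∪ b.fv
    rw [NSeqs.append, NSeqs.fv]
    simp
  | .cons s ss, b => by
    show (NSeqs.append (.cons s ss) b).fv = (NSeqs.cons s ss).fv ∪ b.fv
    rw [NSeqs.append, NSeqs.fv, NSeqs.fv]
    rw [show NSeqs.append ss b = ss ++ b from rfl, NSeqs.fv_append, Finset.union_assoc]

lemma NSeq.fv_merge (s t : NSeq) : (s.merge t).fv = s.fv ∪ t.fv := by
  obtain ⟨X, Γ, Δ, c⟩ := s
  obtain ⟨Y, Φ, Ψ, d⟩ := t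
  rw [NSeq.merge, NSeq.fv, NSeq.fv, NSeq.fv, NSeqs.fv_append, Multiset.toFinset_add,
    msFv_add, msFv_add]
  ext v; simp; tauto

lemma fv_foldl_merge : ∀ (l : List NSeq) (a : NSeq),
    (l.foldl NSeq.merge a).fv = a.fv ∪ listFv l
  | [], a => by simp [listFv]
  | x :: xs, a => by
    show (xs.foldl NSeq.merge (a.merge x)).fv = a.fv ∪ (x.fv ∪ listFv xs)
    rw [fv_foldl_merge xs, NSeq.fv_merge, Finset.union_assoc]

mutual
  theorem NCtx.fv_fill : ∀ (C : NCtx) (L : List NSeq),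
      (C.fill L).fv = C.fvC ∪ listFv (L.take C.holes)
    | .node X Γ Δ k cs, L => by
      rw [NCtx.fill, fv_foldl_merge, NSeq.fv, NCtxs.fv_fill cs, NCtx.fvC, NCtx.holes,
        List.take_add, listFv_append]
      ext v; simp; tauto
  theorem NCtxs.fv_fill : ∀ (cs : NCtxs) (M : List NSeq),
      (cs.fill M).fv = cs.fvCs ∪ listFv (M.take cs.holes)
    | .nil, M => by
      rw [NCtxs.fill, NSeqs.fv, NCtxs.fvCs, NCtxs.holes]
      simp [listFv]
    | .cons c cs, M => by
      rw [NCtxs.fill, NSeqs.fv, NCtx.fv_fill c, NCtxs.fv_fill cs, NCtxs.fvCs,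
        NCtxs.holes, List.take_add, listFv_append, List.take_take, min_self]
      ext v; simp; tauto
end

lemma Multiset.map_congr' {X : Multiset ℕ} {σ ρ : ℕ → ℕ}
    (h : ∀ v ∈ X, σ v = ρ v) : X.map σ = X.map ρ := Multiset.map_congr rfl h

mutual
  theorem SRel.congr : ∀ {s : NSeq} {σ ρ : ℕ → ℕ} {t : NSeq}, SRel σ s t →
      (∀ v ∈ s.fv, σ v = ρ v) → SRel ρ s t
    | .node X Γ Δ cs, σ, ρ, t, h, hag => by
      cases h with
      | node hΓ hΔ hcs =>
        have hX : X.map σ = X.map ρ := Multiset.map_congr' fun v hv =>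
          hag v (by rw [NSeq.fv]; simp [Multiset.mem_toFinset.2 hv])
        rw [hX]
        exact SRel.node
          (hΓ.congr fun v hv => hag v (by rw [NSeq.fv]; simp [hv]))
          (hΔ.congr fun v hv => hag v (by rw [NSeq.fv]; simp [hv]))
          (SsRel.congr hcs fun v hv => hag v (by rw [NSeq.fv]; simp [hv]))
  theorem SsRel.congr : ∀ {ss : NSeqs} {σ ρ : ℕ → ℕ} {ts : NSeqs}, SsRel σ ss ts →
      (∀ v ∈ ss.fv, σ v = ρ v) → SsRel ρ ss ts
    | .nil, σ, ρ, _, h, _ => by cases h; exact .nil ρ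
    | .cons s ss, σ, ρ, _, h, hag => by
      cases h with
      | cons hs hss =>
        exact .cons (SRel.congr hs fun v hv => hag v (by rw [NSeqs.fv]; simp [hv]))
          (SsRel.congr hss fun v hv => hag v (by rw [NSeqs.fv]; simp [hv]))
end

mutual
  theorem CRel.congr : ∀ {c : NCtx} {σ ρ : ℕ → ℕ} {c' : NCtx}, CRel σ c c' →
      (∀ v ∈ c.fvC, σ v = ρ v) → CRel ρ c c'
    | .node X Γ Δ k cs, σ, ρ, _, h, hag => by
      cases h with
      | node hΓ hΔ hcs =>
        have hX : X.map σ = X.map ρ := Multiset.map_congr' fun v hv =>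
          hag v (by rw [NCtx.fvC]; simp [Multiset.mem_toFinset.2 hv])
        rw [hX]
        exact CRel.node
          (hΓ.congr fun v hv => hag v (by rw [NCtx.fvC]; simp [hv]))
          (hΔ.congr fun v hv => hag v (by rw [NCtx.fvC]; simp [hv]))
          (CsRel.congr hcs fun v hv => hag v (by rw [NCtx.fvC]; simp [hv]))
  theorem CsRel.congr : ∀ {cs : NCtxs} {σ ρ : ℕ → ℕ} {cs' : NCtxs}, CsRel σ cs cs' →
      (∀ v ∈ cs.fvCs, σ v = ρ v) → CsRel ρ cs cs'
    | .nil, σ, ρ, _, h, _ => by cases h; exact .nil ρ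
    | .cons c cs, σ, ρ, _, h, hag => by
      cases h with
      | cons hc hcs =>
        exact .cons (CRel.congr hc fun v hv => hag v (by rw [NCtxs.fvCs]; simp [hv]))
          (CsRel.congr hcs fun v hv => hag v (by rw [NCtxs.fvCs]; simp [hv]))
end

/-! ### Hole-count bookkeeping and small helpers -/

mutual
  theorem NCtx.holeDepths_length : ∀ (C : NCtx), C.holeDepths.length = C.holes
    | .node X Γ Δ k cs => by
      rw [NCtx.holeDepths, NCtx.holes]
      simp [NCtxs.holeDepths_length cs]
  theorem NCtxs.holeDepths_length : ∀ (cs : NCtxs), cs.holeDepths.length = cs.holes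
    | .nil => rfl
    | .cons c cs => by
      rw [NCtxs.holeDepths, NCtxs.holes]
      simp [NCtx.holeDepths_length c, NCtxs.holeDepths_length cs]
end

lemma fill_rel1 {σ : ℕ → ℕ} {C C' : NCtx} {s t : NSeq} (hC' : CRel σ C C')
    (h : SRel σ s t) : SRel σ (C.fill [s]) (C'.fill [t]) :=
  hC'.fill_rel (.cons h .nil)

lemma fill_rel2 {σ : ℕ → ℕ} {C C' : NCtx} {s₁ t₁ s₂ t₂ : NSeq} (hC' : CRel σ C C')
    (h₁ : SRel σ s₁ t₁) (h₂ : SRel σ s₂ t₂) :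
    SRel σ (C.fill [s₁, s₂]) (C'.fill [t₁, t₂]) :=
  hC'.fill_rel (.cons h₁ (.cons h₂ .nil))

lemma fill_inv1 {σ : ℕ → ℕ} {C : NCtx} {s : NSeq} {T : NSeq} (hC : C.holes = 1)
    (h : SRel σ (C.fill [s]) T) :
    ∃ C' t, CRel σ C C' ∧ C'.holes = 1 ∧ SRel σ s t ∧ T = C'.fill [t] := by
  rcases NCtx.fill_inv C h with ⟨C', L', hC', hL, rfl⟩
  rw [hC] at hL
  have : List.take 1 [s] = [s] := rfl
  rw [this] at hL
  cases hL with
  | cons hst hnil =>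
    cases hnil
    exact ⟨C', _, hC', by rw [hC'.holes_eq, hC], hst, rfl⟩

lemma fill_inv2 {σ : ℕ → ℕ} {C : NCtx} {s₁ s₂ : NSeq} {T : NSeq} (hC : C.holes = 2)
    (h : SRel σ (C.fill [s₁, s₂]) T) :
    ∃ C' t₁ t₂, CRel σ C C' ∧ C'.holes = 2 ∧ SRel σ s₁ t₁ ∧ SRel σ s₂ t₂ ∧
      T = C'.fill [t₁, t₂] := by
  rcases NCtx.fill_inv C h with ⟨C', L', hC', hL, rfl⟩
  rw [hC] at hL
  have : List.take 2 [s₁, s₂] = [s₁, s₂] := rfl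
  rw [this] at hL
  cases hL with
  | cons h1 hL2 =>
    cases hL2 with
    | cons h2 hnil =>
      cases hnil
      exact ⟨C', _, _, hC', by rw [hC'.holes_eq, hC], h1, h2, rfl⟩

lemma mem1 {α : Type} {P : α → Prop} {a : α} (h : P a) : ∀ q ∈ [a], P q := by
  intro q hq; rcases List.mem_singleton.mp hq with rfl; exact h

lemma mem2 {α : Type} {P : α → Prop} {a b : α} (h1 : P a) (h2 : P b) :
    ∀ q ∈ [a, b], P q := by
  intro q hq
  rcases List.mem_cons.mp hq with rfl | hq'
  · exact h1
  · rcases List.mem_singleton.mp hq' with rfl; exact h2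

/-! ### Inversion lemmas for `FSub` -/

lemma FSub.bot_inv {σ : ℕ → ℕ} {B : Fml} (h : FSub σ .bot B) : B = .bot := by cases h; rfl

lemma FSub.eq_inv {σ : ℕ → ℕ} {a b : ℕ} {B : Fml} (h : FSub σ (.eq a b) B) :
    B = .eq (σ a) (σ b) := by cases h; rfl

lemma FSub.imp_inv {σ : ℕ → ℕ} {A B C : Fml} (h : FSub σ (.imp A B) C) :
    ∃ A' B', C = .imp A' B' ∧ FSub σ A A' ∧ FSub σ B B' := by
  cases h with
  | imp h1 h2 => exact ⟨_, _, rfl, h1, h2⟩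

lemma FSub.box_inv {σ : ℕ → ℕ} {A B : Fml} (h : FSub σ (.box A) B) :
    ∃ B', B = .box B' ∧ FSub σ A B' := by
  cases h with
  | box h1 => exact ⟨_, rfl, h1⟩

lemma FSub.all_inv {σ : ℕ → ℕ} {x : ℕ} {A B : Fml} (h : FSub σ (.all x A) B) :
    ∃ x' B', B = .all x' B' ∧ x' ∉ (A.fv.erase x).image σ ∧
      FSub (Function.update σ x x') A B' := by
  cases h with
  | all _ x' hx' h1 => exact ⟨x', _, rfl, hx', h1⟩

/-! ### Key substitution-composition lemmas -/

lemma key_allL {σ : ℕ → ℕ} {x x' z : ℕ} {A B' : Fml}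
    (hx' : x' ∉ (A.fv.erase x).image σ) (hB' : FSub (Function.update σ x x') A B') :
    FSub σ (A.sub z x) (B'.sub (σ z) x') := by
  have hcomp : FSub (fun v => if v = x then σ z else σ v) A (B'.sub (σ z) x') := by
    refine FSub.comp hB' (FSub.sub B' (σ z) x') fun v hv => ?_
    rcases Classical.em (v = x) with rfl | hne
    · simp [upd_app]
    · have hne' : σ v ≠ x' := fun hc =>
        hx' (Finset.mem_image.2 ⟨v, Finset.mem_erase.2 ⟨hne, hv⟩, hc⟩)
      simp [upd_app, hne, hne']
  refine FSub.div (FSub.sub A z x) hcomp fun v hv => ?_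
  rcases Classical.em (v = x) with rfl | hne
  · simp
  · simp [hne]

lemma key_allR {σ : ℕ → ℕ} {x x' y y₁ : ℕ} {A B' : Fml}
    (hx' : x' ∉ (A.fv.erase x).image σ) (hB' : FSub (Function.update σ x x') A B')
    (hy : y ∉ A.fv.erase x) :
    FSub (fun v => if v = y then y₁ else σ v) (A.sub y x) (B'.sub y₁ x') := by
  have hcomp : FSub (fun v => if v = x then y₁ else σ v) A (B'.sub y₁ x') := by
    refine FSub.comp hB' (FSub.sub B' y₁ x') fun v hv => ?_
    rcases Classical.em (v = x) with rfl | hne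
    · simp [upd_app]
    · have hne' : σ v ≠ x' := fun hc =>
        hx' (Finset.mem_image.2 ⟨v, Finset.mem_erase.2 ⟨hne, hv⟩, hc⟩)
      simp [upd_app, hne, hne']
  refine FSub.div (FSub.sub A y x) hcomp fun v hv => ?_
  rcases Classical.em (v = x) with rfl | hne
  · simp
  · have hvy : v ≠ y := fun hc => hy (hc ▸ Finset.mem_erase.2 ⟨hne, hv⟩)
    simp [hne, hvy]

/-! ### Atomic formulas -/

lemma Fml.Atomic.substF' {P : Fml} (h : P.Atomic) (σ : ℕ → ℕ) :
    (Fml.substF σ P).Atomic := by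
  cases P <;> simp [Fml.Atomic, Fml.substF] at *

lemma Fml.Atomic.sub' {P : Fml} (h : P.Atomic) (y x : ℕ) : (P.sub y x).Atomic :=
  h.substF' _

lemma substF_comp_atomic {P : Fml} {σ τ μ : ℕ → ℕ} (hP : P.Atomic)
    (hag : ∀ v ∈ P.fv, μ v = σ (τ v)) :
    Fml.substF σ (Fml.substF τ P) = Fml.substF μ P :=
  ((FSub.substF τ P).comp (FSub.substF σ _) hag).atomic_eq hP

/-! ### The main lemma -/

theorem deriv_srel {L : Set Ax} : ∀ {n : ℕ} {S : NSeq}, Deriv L n S →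
    ∀ {σ : ℕ → ℕ} {T : NSeq}, SRel σ S T → Deriv L n T := by
  intro n S h
  induction h with
  | @step n ps S hstep hprem ih =>
    intro σ T hT
    cases hstep with
    | init C X Γ Δ P hC hP =>
      rcases fill_inv1 hC hT with ⟨C', t, hC', hC'1, hst, rfl⟩
      cases hst with
      | @node _ _ _ Γt Δt _ ct hΓ hΔ hct =>
        rcases Multiset.rel_cons_left.1 hΓ with ⟨Q₁, Γ'', hQ₁, hΓ'', rfl⟩
        rcases Multiset.rel_cons_left.1 hΔ with ⟨Q₂, Δ'', hQ₂, hΔ'', rfl⟩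
        cases hct
        rw [hQ₁.atomic_eq hP, hQ₂.atomic_eq hP]
        exact Deriv.step
          (Step.init C' (X.map σ) Γ'' Δ'' (Fml.substF σ P) hC'1 (hP.substF' σ))
          (by intro q hq; simp at hq)
    | botL C X Γ Δ hC =>
      rcases fill_inv1 hC hT with ⟨C', t, hC', hC'1, hst, rfl⟩
      cases hst with
      | @node _ _ _ Γt Δt _ ct hΓ hΔ hct =>
        rcases Multiset.rel_cons_left.1 hΓ with ⟨Q, Γ'', hQ, hΓ'', rfl⟩
        cases hct
        rw [hQ.bot_inv]
        exact Deriv.step (Step.botL C' (X.map σ) Γ'' Δt hC'1) (by intro q hq; simp at hq)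
    | impL C X Γ Δ A B hC =>
      rcases fill_inv1 hC hT with ⟨C', t, hC', hC'1, hst, rfl⟩
      cases hst with
      | @node _ _ _ Γt Δt _ ct hΓ hΔ hct =>
        rcases Multiset.rel_cons_left.1 hΓ with ⟨F, Γ'', hF, hΓ'', rfl⟩
        rcases hF.imp_inv with ⟨A', B', rfl, hA, hB⟩
        cases hct
        refine Deriv.step (Step.impL C' (X.map σ) Γ'' Δt A' B' hC'1) (mem2 ?_ ?_)
        · exact ih _ (by simp) (fill_rel1 hC' (SRel.node hΓ'' (MRel.cons hA hΔ) (.nil σ)))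
        · exact ih _ (by simp) (fill_rel1 hC' (SRel.node (MRel.cons hB hΓ'') hΔ (.nil σ)))
    | impR C X Γ Δ A B hC =>
      rcases fill_inv1 hC hT with ⟨C', t, hC', hC'1, hst, rfl⟩
      cases hst with
      | @node _ _ _ Γt Δt _ ct hΓ hΔ hct =>
        rcases Multiset.rel_cons_left.1 hΔ with ⟨F, Δ'', hF, hΔ'', rfl⟩
        rcases hF.imp_inv with ⟨A', B', rfl, hA, hB⟩
        cases hct
        refine Deriv.step (Step.impR C' (X.map σ) Γt Δ'' A' B' hC'1) (mem1 ?_)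
        exact ih _ (by simp)
          (fill_rel1 hC' (SRel.node (MRel.cons hA hΓ) (MRel.cons hB hΔ'') (.nil σ)))
    | allL C X Γ Δ x z A hC =>
      rcases fill_inv1 hC hT with ⟨C', t, hC', hC'1, hst, rfl⟩
      cases hst with
      | @node _ _ _ Γt Δt _ ct hΓ hΔ hct =>
        rcases Multiset.rel_cons_left.1 hΓ with ⟨F, Γ'', hF, hΓ'', rfl⟩
        rcases hF.all_inv with ⟨x', B', rfl, hx', hB'⟩
        cases hct
        simp only [Multiset.map_cons]
        refine Deriv.step (Step.allL C' (X.map σ) Γ'' Δt x' (σ z) B' hC'1) (mem1 ?_)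
        refine ih _ (List.mem_singleton.mpr rfl) (σ := σ) ?_
        simpa only [Multiset.map_cons] using fill_rel1 hC'
          (SRel.node (X := z ::ₘ X)
            (MRel.cons (key_allL hx' hB') (MRel.cons hF hΓ'')) hΔ (.nil σ))
    | allR C X Γ Δ x y A hC hfresh =>
      rcases fill_inv1 hC hT with ⟨C', t, hC', hC'1, hst, rfl⟩
      cases hst with
      | @node _ _ _ Γt Δt _ ct hΓ hΔ hct =>
        rcases Multiset.rel_cons_left.1 hΔ with ⟨F, Δ'', hF, hΔ'', rfl⟩
        rcases hF.all_inv with ⟨x', B', rfl, hx', hB'⟩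
        cases hct
        set y₁ :=
          (NSeq.fv (C'.fill [.node (X.map σ) Γt (Fml.all x' B' ::ₘ Δ'') .nil])).sup id + 1
          with hy₁def
        have hy₁ : y₁ ∉ NSeq.fv (C'.fill [.node (X.map σ) Γt (Fml.all x' B' ::ₘ Δ'') .nil]) := by
          intro hmem
          have hle := Finset.le_sup (f := id) hmem
          simp only [id] at hle
          omega
        refine Deriv.step (Step.allR C' (X.map σ) Γt Δ'' x' y₁ B' hC'1 hy₁) (mem1 ?_)
        rw [NCtx.fv_fill, hC] at hfresh
        have htake : List.take 1 [NSeq.node X Γ (Fml.all x A ::ₘ Δ) .nil] =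
            [NSeq.node X Γ (Fml.all x A ::ₘ Δ) .nil] := rfl
        rw [htake] at hfresh
        have hyC : y ∉ C.fvC := fun hm => hfresh (Finset.mem_union_left _ hm)
        have hyS : y ∉ (NSeq.node X Γ (Fml.all x A ::ₘ Δ) .nil).fv := fun hm =>
          hfresh (Finset.mem_union_right _ (by simpa [listFv] using hm))
        rw [NSeq.fv, msFv_cons] at hyS
        have hyX : y ∉ X.toFinset := fun hm => hyS (by simp [hm])
        have hyΓ : y ∉ msFv Γ := fun hm => hyS (by simp [hm])
        have hyA : y ∉ (Fml.all x A).fv := fun hm => hyS (by simp [hm])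
        have hyΔ : y ∉ msFv Δ := fun hm => hyS (by simp [hm])
        have hyAe : y ∉ A.fv.erase x := by
          intro hm; exact hyA (by simpa [Fml.fv] using hm)
        set ρ := fun v => if v = y then y₁ else σ v with hρdef
        have hag : ∀ v, v ≠ y → σ v = ρ v := fun v hv => by simp [hρdef, hv]
        refine ih _ (List.mem_singleton.mpr rfl) (σ := ρ) ?_
        have hXmap : (y ::ₘ X).map ρ = y₁ ::ₘ X.map σ := by
          rw [Multiset.map_cons]
          congr 1
          · simp [hρdef]
          · exact (Multiset.map_congr' fun v hv =>
              hag v fun hc => hyX (Multiset.mem_toFinset.2 (hc ▸ hv))).symm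
        have hkey : FSub ρ (A.sub y x) (B'.sub y₁ x') :=
          hρdef ▸ key_allR hx' hB' hyAe
        have hnode : SRel ρ (.node (y ::ₘ X) Γ (A.sub y x ::ₘ Δ) .nil)
            (.node ((y ::ₘ X).map ρ) Γt (B'.sub y₁ x' ::ₘ Δ'') .nil) :=
          SRel.node
            (MRel.congr hΓ fun v hv => hag v fun hc => hyΓ (hc ▸ hv))
            (MRel.cons hkey (MRel.congr hΔ'' fun v hv => hag v fun hc => hyΔ (hc ▸ hv)))
            (.nil ρ)
        rw [hXmap] at hnode
        exact fill_rel1 (hC'.congr fun v hv => hag v fun hc => hyC (hc ▸ hv)) hnode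
    | boxL C X Y Γ Δ Φ Ψ ts A hC =>
      rcases fill_inv1 hC hT with ⟨C', t, hC', hC'1, hst, rfl⟩
      cases hst with
      | @node _ _ _ Γt Δt _ ct hΓ hΔ hct =>
        rcases Multiset.rel_cons_left.1 hΓ with ⟨F, Γ'', hF, hΓ'', rfl⟩
        rcases hF.box_inv with ⟨B, rfl, hB⟩
        cases hct with
        | cons hchild hnil =>
          cases hnil
          cases hchild with
          | @node _ _ _ Φt Ψt _ tst hΦ hΨ hts =>
            refine Deriv.step
              (Step.boxL C' (X.map σ) (Y.map σ) Γ'' Δt Φt Ψt tst B hC'1) (mem1 ?_)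
            exact ih _ (by simp) (fill_rel1 hC' (SRel.node (MRel.cons hF hΓ'') hΔ
              (.cons (SRel.node (MRel.cons hB hΦ) hΨ hts) (.nil σ))))
    | boxR C X Γ Δ A hC =>
      rcases fill_inv1 hC hT with ⟨C', t, hC', hC'1, hst, rfl⟩
      cases hst with
      | @node _ _ _ Γt Δt _ ct hΓ hΔ hct =>
        rcases Multiset.rel_cons_left.1 hΔ with ⟨F, Δ'', hF, hΔ'', rfl⟩
        rcases hF.box_inv with ⟨B, rfl, hB⟩
        cases hct
        refine Deriv.step (Step.boxR C' (X.map σ) Γt Δ'' B hC'1) (mem1 ?_)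
        refine ih _ (List.mem_singleton.mpr rfl) (σ := σ) ?_
        have hsing : MRel σ {A} {B} := by
          rw [← Multiset.cons_zero A, ← Multiset.cons_zero B]
          exact MRel.cons hB (MRel.zero σ)
        have hchild : SRel σ (.node 0 0 {A} .nil)
            (.node ((0 : Multiset ℕ).map σ) 0 {B} .nil) :=
          SRel.node (MRel.zero σ) hsing (.nil σ)
        rw [Multiset.map_zero] at hchild
        exact fill_rel1 hC' (SRel.node hΓ hΔ'' (.cons hchild (.nil σ)))
    | ref C X Γ Δ x hC =>
      rcases fill_inv1 hC hT with ⟨C', t, hC', hC'1, hst, rfl⟩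
      cases hst with
      | @node _ _ _ Γt Δt _ ct hΓ hΔ hct =>
        cases hct
        refine Deriv.step (Step.ref C' (X.map σ) Γt Δt (σ x) hC'1) (mem1 ?_)
        exact ih _ (by simp)
          (fill_rel1 hC' (SRel.node (MRel.cons (FSub.eq σ x x) hΓ) hΔ (.nil σ)))
    | repl C X Γ Δ x y z P hC hP =>
      rcases fill_inv1 hC hT with ⟨C', t, hC', hC'1, hst, rfl⟩
      cases hst with
      | @node _ _ _ Γt Δt _ ct hΓ hΔ hct =>
        rcases Multiset.rel_cons_left.1 hΓ with ⟨E, Γ₁, hE, hΓ₁, rfl⟩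
        rcases Multiset.rel_cons_left.1 hΓ₁ with ⟨Q, Γ'', hQ, hΓ'', rfl⟩
        cases hct
        rw [hE.eq_inv]
        have hPxz : (P.sub x z).Atomic := hP.sub' x z
        have hQeq : Q = Fml.substF σ (P.sub x z) := hQ.atomic_eq hPxz
        set w := ((P.fv.image σ).sup id) + 1 with hwdef
        have hw : ∀ v ∈ P.fv, σ v ≠ w := by
          intro v hv hc
          have hle : id (σ v) ≤ (P.fv.image σ).sup id :=
            Finset.le_sup (Finset.mem_image_of_mem σ hv)
          simp only [id] at hle
          omega
        set P₁ := Fml.substF (fun v => if v = z then w else σ v) P with hP₁def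
        have hP₁a : P₁.Atomic := hP.substF' _
        have ha : P₁.sub (σ x) w = Fml.substF σ (P.sub x z) := by
          have h1 : Fml.substF (fun v => if v = w then σ x else v)
              (Fml.substF (fun v => if v = z then w else σ v) P) =
              Fml.substF (fun v => if v = z then σ x else σ v) P :=
            substF_comp_atomic hP fun v hv => by
              rcases Classical.em (v = z) with rfl | hne
              · simp
              · simp [hne, hw v hv]
          have h2 : Fml.substF σ (Fml.substF (fun v => if v = z then x else v) P) =
              Fml.substF (fun v => if v = z then σ x else σ v) P :=
            substF_comp_atomic hP fun v hv => by
              rcases Classical.em (v = z) with rfl | hne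
              · simp
              · simp [hne]
          show Fml.substF (fun v => if v = w then σ x else v) P₁ = _
          rw [hP₁def, h1, show Fml.substF σ (P.sub x z) =
            Fml.substF σ (Fml.substF (fun v => if v = z then x else v) P) from rfl, h2]
        have hb : P₁.sub (σ y) w = Fml.substF σ (P.sub y z) := by
          have h1 : Fml.substF (fun v => if v = w then σ y else v)
              (Fml.substF (fun v => if v = z then w else σ v) P) =
              Fml.substF (fun v => if v = z then σ y else σ v) P :=
            substF_comp_atomic hP fun v hv => by
              rcases Classical.em (v = z) with rfl | hne
              · simp
              · simp [hne, hw v hv]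
          have h2 : Fml.substF σ (Fml.substF (fun v => if v = z then y else v) P) =
              Fml.substF (fun v => if v = z then σ y else σ v) P :=
            substF_comp_atomic hP fun v hv => by
              rcases Classical.em (v = z) with rfl | hne
              · simp
              · simp [hne]
          show Fml.substF (fun v => if v = w then σ y else v) P₁ = _
          rw [hP₁def, h1, show Fml.substF σ (P.sub y z) =
            Fml.substF σ (Fml.substF (fun v => if v = z then y else v) P) from rfl, h2]
        rw [hQeq, ← ha]
        refine Deriv.step (Step.repl C' (X.map σ) Γ'' Δt (σ x) (σ y) w P₁ hC'1 hP₁a)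
          (mem1 ?_)
        refine ih _ (List.mem_singleton.mpr rfl) (σ := σ) ?_
        refine fill_rel1 hC' (SRel.node (MRel.cons ?_ (MRel.cons (FSub.eq σ x y)
          (MRel.cons ?_ hΓ''))) hΔ (.nil σ))
        · rw [hb]; exact FSub.substF σ _
        · rw [ha]; exact FSub.substF σ _
    | replX C X Γ Δ x y hC =>
      rcases fill_inv1 hC hT with ⟨C', t, hC', hC'1, hst, rfl⟩
      cases hst with
      | @node _ _ _ Γt Δt _ ct hΓ hΔ hct =>
        rcases Multiset.rel_cons_left.1 hΓ with ⟨E, Γ'', hE, hΓ'', rfl⟩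
        cases hct
        rw [hE.eq_inv]
        simp only [Multiset.map_cons]
        refine Deriv.step (Step.replX C' (X.map σ) Γ'' Δt (σ x) (σ y) hC'1) (mem1 ?_)
        refine ih _ (List.mem_singleton.mpr rfl) (σ := σ) ?_
        simpa only [Multiset.map_cons] using fill_rel1 hC'
          (SRel.node (X := x ::ₘ y ::ₘ X) (MRel.cons (FSub.eq σ x y) hΓ'') hΔ (.nil σ))
    | rig C X Y Γ Δ Φ Ψ x y hC =>
      rcases fill_inv2 hC hT with ⟨C', t₁, t₂, hC', hC'2, h1, h2, rfl⟩
      cases h1 with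
      | @node _ _ _ Γt Δt _ ct hΓ hΔ hct =>
        cases h2 with
        | @node _ _ _ Φt Ψt _ dt hΦ hΨ hdt =>
          rcases Multiset.rel_cons_left.1 hΓ with ⟨E, Γ'', hE, hΓ'', rfl⟩
          cases hct
          cases hdt
          rw [hE.eq_inv]
          refine Deriv.step
            (Step.rig C' (X.map σ) (Y.map σ) Γ'' Δt Φt Ψt (σ x) (σ y) hC'2) (mem1 ?_)
          exact ih _ (by simp) (fill_rel2 hC'
            (SRel.node (MRel.cons (FSub.eq σ x y) hΓ'') hΔ (.nil σ))
            (SRel.node (MRel.cons (FSub.eq σ x y) hΦ) hΨ (.nil σ)))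
    | rD C X Γ Δ hmem hC =>
      rcases fill_inv1 hC hT with ⟨C', t, hC', hC'1, hst, rfl⟩
      cases hst with
      | @node _ _ _ Γt Δt _ ct hΓ hΔ hct =>
        cases hct
        refine Deriv.step (Step.rD C' (X.map σ) Γt Δt hmem hC'1) (mem1 ?_)
        refine ih _ (List.mem_singleton.mpr rfl) (σ := σ) ?_
        have hchild : SRel σ (.node 0 0 0 .nil) (.node ((0 : Multiset ℕ).map σ) 0 0 .nil) :=
          SRel.node (MRel.zero σ) (MRel.zero σ) (.nil σ)
        rw [Multiset.map_zero] at hchild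
        exact fill_rel1 hC' (SRel.node hΓ hΔ (.cons hchild (.nil σ)))
    | rT C X Γ Δ A hmem hC =>
      rcases fill_inv1 hC hT with ⟨C', t, hC', hC'1, hst, rfl⟩
      cases hst with
      | @node _ _ _ Γt Δt _ ct hΓ hΔ hct =>
        rcases Multiset.rel_cons_left.1 hΓ with ⟨F, Γ'', hF, hΓ'', rfl⟩
        rcases hF.box_inv with ⟨B, rfl, hB⟩
        cases hct
        refine Deriv.step (Step.rT C' (X.map σ) Γ'' Δt B hmem hC'1) (mem1 ?_)
        exact ih _ (by simp)
          (fill_rel1 hC' (SRel.node (MRel.cons hB (MRel.cons hF hΓ'')) hΔ (.nil σ)))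
    | rB C X Y Γ Δ Φ Ψ ts A hmem hC =>
      rcases fill_inv1 hC hT with ⟨C', t, hC', hC'1, hst, rfl⟩
      cases hst with
      | @node _ _ _ Γt Δt _ ct hΓ hΔ hct =>
        cases hct with
        | cons hchild hnil =>
          cases hnil
          cases hchild with
          | @node _ _ _ Φt Ψt _ tst hΦ hΨ hts =>
            rcases Multiset.rel_cons_left.1 hΦ with ⟨F, Φ'', hF, hΦ'', rfl⟩
            rcases hF.box_inv with ⟨B, rfl, hB⟩
            refine Deriv.step
              (Step.rB C' (X.map σ) (Y.map σ) Γt Δt Φ'' Ψt tst B hmem hC'1) (mem1 ?_)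
            exact ih _ (by simp) (fill_rel1 hC' (SRel.node (MRel.cons hB hΓ) hΔ
              (.cons (SRel.node (MRel.cons hF hΦ'') hΨ hts) (.nil σ))))
    | r4 C X Y Γ Δ Φ Ψ ts A hmem hC =>
      rcases fill_inv1 hC hT with ⟨C', t, hC', hC'1, hst, rfl⟩
      cases hst with
      | @node _ _ _ Γt Δt _ ct hΓ hΔ hct =>
        rcases Multiset.rel_cons_left.1 hΓ with ⟨F, Γ'', hF, hΓ'', rfl⟩
        rcases hF.box_inv with ⟨B, rfl, hB⟩
        cases hct with
        | cons hchild hnil =>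
          cases hnil
          cases hchild with
          | @node _ _ _ Φt Ψt _ tst hΦ hΨ hts =>
            refine Deriv.step
              (Step.r4 C' (X.map σ) (Y.map σ) Γ'' Δt Φt Ψt tst B hmem hC'1) (mem1 ?_)
            exact ih _ (by simp) (fill_rel1 hC' (SRel.node (MRel.cons hF hΓ'') hΔ
              (.cons (SRel.node (MRel.cons hF hΦ) hΨ hts) (.nil σ))))
    | r5 C X Y Γ Δ Φ Ψ A hmem hd =>
      have hC2 : C.holes = 2 := by
        rcases hd with ⟨d₁, d₂, hdd, _⟩
        rw [← NCtx.holeDepths_length, hdd]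
        rfl
      rcases fill_inv2 hC2 hT with ⟨C', t₁, t₂, hC', hC'2, h1, h2, rfl⟩
      cases h1 with
      | @node _ _ _ Γt Δt _ ct hΓ hΔ hct =>
        cases h2 with
        | @node _ _ _ Φt Ψt _ dt hΦ hΨ hdt =>
          rcases Multiset.rel_cons_left.1 hΓ with ⟨F, Γ'', hF, hΓ'', rfl⟩
          rcases hF.box_inv with ⟨B, rfl, hB⟩
          cases hct
          cases hdt
          have hd' : ∃ d₁ d₂, C'.holeDepths = [d₁, d₂] ∧ 1 ≤ d₂ := by
            rw [hC'.holeDepths_eq]; exact hd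
          refine Deriv.step
            (Step.r5 C' (X.map σ) (Y.map σ) Γ'' Δt Φt Ψt B hmem hd') (mem1 ?_)
          exact ih _ (by simp) (fill_rel2 hC'
            (SRel.node (MRel.cons hF hΓ'') hΔ (.nil σ))
            (SRel.node (MRel.cons hF hΦ) hΨ (.nil σ)))
    | rcbf C X Y Γ Δ Φ Ψ ts x hmem hC =>
      rcases fill_inv1 hC hT with ⟨C', t, hC', hC'1, hst, rfl⟩
      cases hst with
      | @node _ _ _ Γt Δt _ ct hΓ hΔ hct =>
        cases hct with
        | cons hchild hnil =>
          cases hnil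
          cases hchild with
          | @node _ _ _ Φt Ψt _ tst hΦ hΨ hts =>
            simp only [Multiset.map_cons]
            refine Deriv.step
              (Step.rcbf C' (X.map σ) (Y.map σ) Γt Δt Φt Ψt tst (σ x) hmem hC'1) (mem1 ?_)
            refine ih _ (List.mem_singleton.mpr rfl) (σ := σ) ?_
            simpa only [Multiset.map_cons] using fill_rel1 hC'
              (SRel.node (X := x ::ₘ X) hΓ hΔ
                (.cons (SRel.node (X := x ::ₘ Y) hΦ hΨ hts) (.nil σ)))
    | rbf C X Y Γ Δ Φ Ψ ts x hmem hC =>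
      rcases fill_inv1 hC hT with ⟨C', t, hC', hC'1, hst, rfl⟩
      cases hst with
      | @node _ _ _ Γt Δt _ ct hΓ hΔ hct =>
        cases hct with
        | cons hchild hnil =>
          cases hnil
          cases hchild with
          | @node _ _ _ Φt Ψt _ tst hΦ hΨ hts =>
            simp only [Multiset.map_cons]
            refine Deriv.step
              (Step.rbf C' (X.map σ) (Y.map σ) Γt Δt Φt Ψt tst (σ x) hmem hC'1) (mem1 ?_)
            refine ih _ (List.mem_singleton.mpr rfl) (σ := σ) ?_
            simpa only [Multiset.map_cons] using fill_rel1 hC'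
              (SRel.node (X := x ::ₘ X) hΓ hΔ
                (.cons (SRel.node (X := x ::ₘ Y) hΦ hΨ hts) (.nil σ)))
    | rui C X Γ Δ x hmem hC =>
      rcases fill_inv1 hC hT with ⟨C', t, hC', hC'1, hst, rfl⟩
      cases hst with
      | @node _ _ _ Γt Δt _ ct hΓ hΔ hct =>
        cases hct
        refine Deriv.step (Step.rui C' (X.map σ) Γt Δt (σ x) hmem hC'1) (mem1 ?_)
        refine ih _ (List.mem_singleton.mpr rfl) (σ := σ) ?_
        simpa only [Multiset.map_cons] using fill_rel1 hC'
          (SRel.node (X := x ::ₘ X) hΓ hΔ (.nil σ))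
    | r5dom C X Y Γ Δ Φ Ψ x hmem hmem2 hd =>
      have hC2 : C.holes = 2 := by
        rcases hd with ⟨d₁, d₂, hdd, _⟩
        rw [← NCtx.holeDepths_length, hdd]
        rfl
      rcases fill_inv2 hC2 hT with ⟨C', t₁, t₂, hC', hC'2, h1, h2, rfl⟩
      cases h1 with
      | @node _ _ _ Γt Δt _ ct hΓ hΔ hct =>
        cases h2 with
        | @node _ _ _ Φt Ψt _ dt hΦ hΨ hdt =>
          cases hct
          cases hdt
          have hd' : ∃ d₁ d₂, C'.holeDepths = [d₁, d₂] ∧ 1 ≤ d₁ ∧ 1 ≤ d₂ := by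
            rw [hC'.holeDepths_eq]; exact hd
          simp only [Multiset.map_cons]
          refine Deriv.step
            (Step.r5dom C' (X.map σ) (Y.map σ) Γt Δt Φt Ψt (σ x) hmem hmem2 hd') (mem1 ?_)
          refine ih _ (List.mem_singleton.mpr rfl) (σ := σ) ?_
          simpa only [Multiset.map_cons] using fill_rel2 hC'
            (SRel.node (X := x ::ₘ X) hΓ hΔ (.nil σ))
            (SRel.node (X := x ::ₘ Y) hΦ hΨ (.nil σ))

/-- **Substitution (Lemma 4)**: the rule `(y/x)` — applying the capture-avoiding
substitution of `y` for the free occurrences of `x` componentwise to every signature and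
every formula throughout the nested sequent — is height-preserving admissible in every
properly closed nested calculus `NQ.L`. -/
theorem substitution_hp_admissible (L : Set Ax) (hL : ProperlyClosed L)
    (x y : ℕ) (n : ℕ) (S : NSeq) (h : Deriv L n S) :
    Deriv L n (S.subst (fun v => if v = x then y else v)) := by
  exact deriv_srel h (SRel.self _ S)

end NQML
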